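/- arXiv:1505.06418 — 2 statements merged into one kernel-verified Lean document; each statement's English description precedes it below -/
import Mathlib

section
/- (Schur–Horn, easy direction) For any real symmetric n×n matrix A with eigenvalues λ_1,...,λ_n, the diagonal vector (A_{11},...,A_{nn}) lies in the convex hull of {(λ_{σ(1)},...,λ_{σ(n)}) : σ ∈ S_n} (the permutahedron of λ). -/
/-!
The diagonal of `O D_λ Oᵀ` is `(O ⊙ O) λ`, and the entrywise square `O ⊙ O` of an orthogonal
matrix is doubly stochastic because the rows and columns of `O` are unit vectors. By Birkhoff's
theorem a doubly stochastic matrix is a convex combination of permutation matrices, each of which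
sends `λ` to a permutation of `λ`.
-/

open Matrix

variable {R m n : Type*} [Fintype n] [DecidableEq n]

theorem diag_mul_diagonal_mul_transpose [CommSemiring R] (O : Matrix m n R) (d : n → R) :
    diag (O * diagonal d * Oᵀ) = (O ⊙ O) *ᵥ d := by
  ext i
  simp only [diag_apply, mul_apply, diagonal_apply, transpose_apply, mulVec, dotProduct,
    hadamard_apply, mul_ite, mul_zero, Finset.sum_ite_eq', Finset.mem_univ, if_true]
  exact Finset.sum_congr rfl fun j _ => by ring

theorem hadamard_self_mem_doublyStochastic_of_mem_orthogonalGroup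
    [CommRing R] [LinearOrder R] [IsStrictOrderedRing R] {O : Matrix n n R}
    (hO : O ∈ orthogonalGroup n R) : O ⊙ O ∈ doublyStochastic R n := by
  have hrow := (mem_orthogonalGroup_iff n R).mp hO
  have hcol := (mem_orthogonalGroup_iff' n R).mp hO
  refine mem_doublyStochastic_iff_sum.mpr
    ⟨fun i j => mul_self_nonneg _, fun i => ?_, fun j => ?_⟩
  · simpa [mul_apply] using congrFun (congrFun hrow i) i
  · simpa [mul_apply] using congrFun (congrFun hcol j) j

theorem mulVec_mem_convexHull_comp_perm [Field R] [LinearOrder R] [IsStrictOrderedRing R]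
    {M : Matrix n n R} (hM : M ∈ doublyStochastic R n) (x : n → R) :
    M *ᵥ x ∈ convexHull R {y | ∃ σ : Equiv.Perm n, y = x ∘ σ} := by
  have hM' : M ∈ convexHull R {σ.permMatrix R | σ : Equiv.Perm n} := by
    rwa [← doublyStochastic_eq_convexHull_permMatrix]
  have hx := Set.mem_image_of_mem ((mulVecBilin R R).flip x) hM'
  rw [LinearMap.image_convexHull] at hx
  refine convexHull_mono ?_ hx
  rintro _ ⟨_, ⟨σ, rfl⟩, rfl⟩
  exact ⟨σ, permMatrix_mulVec σ⟩

/-- Schur–Horn, easy direction: the diagonal of a real symmetric matrix with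
eigenvalues `λ₁, …, λₙ` (i.e. a matrix of the form `O D_λ Oᵀ` with `O`
orthogonal) lies in the permutahedron of `λ`, the convex hull of the
permutations of `λ`. -/
theorem diag_mem_permutahedron (n : ℕ) (lam : Fin n → ℝ)
    (O : Matrix (Fin n) (Fin n) ℝ) (hO : O ∈ Matrix.orthogonalGroup (Fin n) ℝ) :
    (fun i => (O * Matrix.diagonal lam * Oᵀ) i i) ∈
      convexHull ℝ {x : Fin n → ℝ | ∃ σ : Equiv.Perm (Fin n), x = lam ∘ σ} := by
  change diag (O * diagonal lam * Oᵀ) ∈ _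
  rw [diag_mul_diagonal_mul_transpose]
  exact mulVec_mem_convexHull_comp_perm
    (hadamard_self_mem_doublyStochastic_of_mem_orthogonalGroup hO) lam
end

section
/- For a probability vector Y (Y_i ≥ 0, Σ Y_i = 1) and composition η of N, the multinomial density family B^N_η(Y) = C(N,η) ∏_i Y_i^{η_i} satisfies: for every continuous function f on the simplex Δ_{n-1} and every Y ∈ Δ_{n-1}, Σ_{η ⊢ N} B^N_η(Y) f(η/N) → f(Y) as N → ∞. -/
/-!
The weight `C(N, η) ∏ Y_i ^ η_i` is the law of a multinomial vector `η` with parameters `N` and `Y`.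
By the multinomial theorem the weights sum to `(∑ Y_i) ^ N = 1`, and summing out all coordinates but
the `i`-th shows that `η_i` is binomial with parameters `N, Y_i`; hence `η / N` has mean square
distance at most `∑ Y_i (1 - Y_i) / N ≤ 1 / N` from `Y`. A Chebyshev argument then concludes: near
`Y` the function `f` is close to `f Y` by continuity, and the mass far from `Y` is `O(1 / N)` while
`f` is bounded on the compact simplex.
-/

open Finset Filter Topology

section Chebyshev

variable {E F : Type*} [PseudoMetricSpace E] [SeminormedAddCommGroup F]

theorem ContinuousWithinAt.exists_norm_sub_le_add_mul_dist_sq {f : E → F} {S : Set E} {y : E}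
    {M : ℝ} (hf : ContinuousWithinAt f S y) (hy : y ∈ S) (hM : ∀ x ∈ S, ‖f x‖ ≤ M) {ε : ℝ}
    (hε : 0 < ε) : ∃ C, 0 ≤ C ∧ ∀ x ∈ S, ‖f x - f y‖ ≤ ε + C * dist x y ^ 2 := by
  obtain ⟨δ, hδ, hδf⟩ := Metric.continuousWithinAt_iff.1 hf ε hε
  have hM0 : 0 ≤ M := (norm_nonneg _).trans (hM y hy)
  refine ⟨2 * M / δ ^ 2, by positivity, fun x hx => ?_⟩
  rcases lt_or_ge (dist x y) δ with hnear | hfar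
  · have hclose : ‖f x - f y‖ < ε := by simpa [dist_eq_norm] using hδf hx hnear
    have : 0 ≤ 2 * M / δ ^ 2 * dist x y ^ 2 := by positivity
    linarith
  · calc ‖f x - f y‖ ≤ ‖f x‖ + ‖f y‖ := norm_sub_le _ _
      _ ≤ 2 * M / δ ^ 2 * δ ^ 2 := by
        rw [div_mul_cancel₀ _ (by positivity)]
        linarith [hM x hx, hM y hy]
      _ ≤ 2 * M / δ ^ 2 * dist x y ^ 2 := by gcongr
      _ ≤ ε + 2 * M / δ ^ 2 * dist x y ^ 2 := le_add_of_nonneg_left hε.le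

theorem tendsto_sum_smul_of_tendsto_sum_mul_dist_sq [NormedSpace ℝ F] {α β : Type*}
    {l : Filter β} {f : E → F} {S : Set E} {y : E} (hf : ContinuousWithinAt f S y) (hy : y ∈ S)
    (hbdd : ∃ M, ∀ x ∈ S, ‖f x‖ ≤ M) {A : β → Finset α} {p : β → α → ℝ} {x : β → α → E}
    (hp0 : ∀ᶠ b in l, ∀ a ∈ A b, 0 ≤ p b a) (hp1 : ∀ᶠ b in l, ∑ a ∈ A b, p b a = 1)
    (hxS : ∀ᶠ b in l, ∀ a ∈ A b, x b a ∈ S)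
    (hvar : Tendsto (fun b => ∑ a ∈ A b, p b a * dist (x b a) y ^ 2) l (𝓝 0)) :
    Tendsto (fun b => ∑ a ∈ A b, p b a • f (x b a)) l (𝓝 (f y)) := by
  obtain ⟨M, hM⟩ := hbdd
  refine Metric.tendsto_nhds.2 fun ε hε => ?_
  obtain ⟨C, hC0, hC⟩ := hf.exists_norm_sub_le_add_mul_dist_sq hy hM (half_pos hε)
  have hsmall : ∀ᶠ b in l, C * ∑ a ∈ A b, p b a * dist (x b a) y ^ 2 < ε / 2 :=
    (hvar.const_mul C).eventually (gt_mem_nhds (by simpa using half_pos hε))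
  filter_upwards [hp0, hp1, hxS, hsmall] with b hp0 hp1 hxS hsmall
  rw [dist_eq_norm]
  calc ‖∑ a ∈ A b, p b a • f (x b a) - f y‖ = ‖∑ a ∈ A b, p b a • (f (x b a) - f y)‖ := by
        simp only [smul_sub, sum_sub_distrib, ← sum_smul, hp1, one_smul]
    _ ≤ ∑ a ∈ A b, p b a * ‖f (x b a) - f y‖ := by
        refine (norm_sum_le _ _).trans (sum_le_sum fun a ha => ?_)
        rw [norm_smul, Real.norm_of_nonneg (hp0 a ha)]
    _ ≤ ∑ a ∈ A b, p b a * (ε / 2 + C * dist (x b a) y ^ 2) :=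
        sum_le_sum fun a ha => mul_le_mul_of_nonneg_left (hC _ (hxS a ha)) (hp0 a ha)
    _ = ε / 2 + C * ∑ a ∈ A b, p b a * dist (x b a) y ^ 2 := by
        simp only [mul_add, sum_add_distrib, ← sum_mul, hp1, one_mul, mul_sum]
        exact congrArg _ (sum_congr rfl fun a _ => by ring)
    _ < ε := by linarith

end Chebyshev

section Multinomial

variable {ι : Type*} [Fintype ι]

noncomputable def multinomialWeight (Y : ι → ℝ) (η : ι → ℕ) : ℝ :=
  Nat.multinomial univ η * ∏ i, Y i ^ η i

theorem multinomialWeight_nonneg {Y : ι → ℝ} (hY : ∀ i, 0 ≤ Y i) (η : ι → ℕ) :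
    0 ≤ multinomialWeight Y η :=
  mul_nonneg (Nat.cast_nonneg _) (prod_nonneg fun i _ => pow_nonneg (hY i) _)

theorem dist_sq_le_sum_sq (x y : ι → ℝ) : dist x y ^ 2 ≤ ∑ i, (x i - y i) ^ 2 := by
  have hcoord : ∀ i, dist (x i) (y i) ≤ √(∑ j, (x j - y j) ^ 2) := fun i => by
    rw [Real.dist_eq, ← Real.sqrt_sq_eq_abs]
    exact Real.sqrt_le_sqrt
      (single_le_sum (f := fun j => (x j - y j) ^ 2) (fun j _ => sq_nonneg _) (mem_univ i))
  calc dist x y ^ 2 ≤ √(∑ j, (x j - y j) ^ 2) ^ 2 := by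
        gcongr
        exact (dist_pi_le_iff (Real.sqrt_nonneg _)).2 hcoord
    _ = ∑ i, (x i - y i) ^ 2 := Real.sq_sqrt (sum_nonneg fun _ _ => sq_nonneg _)

variable [DecidableEq ι]

theorem div_mem_stdSimplex {N : ℕ} {η : ι → ℕ} (hη : η ∈ piAntidiag univ N) (hN : N ≠ 0) :
    (fun i => (η i : ℝ) / N) ∈ stdSimplex ℝ ι := by
  rw [mem_piAntidiag] at hη
  refine ⟨fun i => by positivity, ?_⟩
  rw [← sum_div, ← Nat.cast_sum, hη.1, div_self (Nat.cast_ne_zero.2 hN)]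

theorem sum_multinomialWeight (Y : ι → ℝ) (N : ℕ) :
    ∑ η ∈ piAntidiag univ N, multinomialWeight Y η = (∑ i, Y i) ^ N :=
  (sum_pow_eq_sum_piAntidiag univ Y N).symm

theorem bernsteinPolynomial.sum_eval_mul_div_sub_sq (x : ℝ) {N : ℕ} (hN : N ≠ 0) :
    ∑ k ∈ range (N + 1), (bernsteinPolynomial ℝ N k).eval x * ((k : ℝ) / N - x) ^ 2 =
      x * (1 - x) / N := by
  have h := congrArg (Polynomial.eval x) (bernsteinPolynomial.variance ℝ N)
  simp only [Polynomial.eval_finsetSum, Polynomial.eval_mul, Polynomial.eval_pow,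
    Polynomial.eval_sub, Polynomial.eval_X, Polynomial.eval_natCast, Polynomial.eval_one,
    nsmul_eq_mul] at h
  have hN' : (N : ℝ) ≠ 0 := Nat.cast_ne_zero.2 hN
  have hterm : ∀ k : ℕ, (bernsteinPolynomial ℝ N k).eval x * ((k : ℝ) / N - x) ^ 2 =
      ((N * x - k) ^ 2 * (bernsteinPolynomial ℝ N k).eval x) / N ^ 2 := fun k => by
    field_simp
    ring
  simp only [hterm, ← sum_div, h]
  field_simp

theorem sum_multinomialWeight_mul_apply {Y : ι → ℝ} (hY : ∑ i, Y i = 1) (N : ℕ) (i : ι)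
    (g : ℕ → ℝ) :
    ∑ η ∈ piAntidiag univ N, multinomialWeight Y η * g (η i) =
      ∑ k ∈ range (N + 1), (bernsteinPolynomial ℝ N k).eval (Y i) * g k := by
  set s := univ.erase i
  have hi : i ∉ s := notMem_erase _ _
  have huniv : univ = cons i s hi := by rw [cons_eq_insert, insert_erase (mem_univ i)]
  have hs : ∑ j ∈ s, Y j = 1 - Y i := by
    rw [← hY, ← add_sum_erase _ _ (mem_univ i), add_sub_cancel_left]
  have hshift : ∀ k ≤ N, ∀ η ∈ piAntidiag s (N - k),
      let η' := (addRightEmbedding fun t => if t = i then k else 0) η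
      (Nat.multinomial (cons i s hi) η' : ℝ) * (∏ j ∈ cons i s hi, Y j ^ η' j) * g (η' i) =
        N.choose k * Y i ^ k * g k * (Nat.multinomial s η * ∏ j ∈ s, Y j ^ η j) := by
    intro k hk η hη η'
    rw [mem_piAntidiag] at hη
    have hη'i : η' i = k := by simpa [η'] using not_imp_comm.1 (hη.2 i) hi
    have hη's : ∀ j ∈ s, η' j = η j := fun j hj => by simp [η', ne_of_mem_erase hj]
    rw [Nat.multinomial_cons, prod_cons, hη'i, Nat.multinomial_congr hη's, sum_congr rfl hη's,
      hη.1, prod_congr rfl fun j hj => by rw [hη's j hj], Nat.add_sub_cancel' hk]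
    push_cast
    ring
  simp only [multinomialWeight]
  rw [huniv, piAntidiag_cons, sum_disjiUnion, Nat.sum_antidiagonal_eq_sum_range_succ_mk]
  refine sum_congr rfl fun k hk => ?_
  rw [sum_map, sum_congr rfl (hshift k (Nat.lt_succ_iff.1 (mem_range.1 hk))), ← mul_sum,
    ← sum_pow_eq_sum_piAntidiag, hs]
  simp only [bernsteinPolynomial, Polynomial.eval_mul, Polynomial.eval_pow, Polynomial.eval_sub,
    Polynomial.eval_X, Polynomial.eval_natCast, Polynomial.eval_one]
  ring

theorem sum_multinomialWeight_mul_dist_sq_le {Y : ι → ℝ} (hY : Y ∈ stdSimplex ℝ ι) {N : ℕ}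
    (hN : N ≠ 0) :
    ∑ η ∈ piAntidiag univ N, multinomialWeight Y η * dist (fun i => (η i : ℝ) / N) Y ^ 2 ≤
      1 / N := by
  calc _ ≤ ∑ η ∈ piAntidiag univ N, multinomialWeight Y η * ∑ i, ((η i : ℝ) / N - Y i) ^ 2 :=
        sum_le_sum fun η _ =>
          mul_le_mul_of_nonneg_left (dist_sq_le_sum_sq _ _) (multinomialWeight_nonneg hY.1 η)
    _ = ∑ i, Y i * (1 - Y i) / N := by
        simp_rw [mul_sum]
        rw [sum_comm]
        refine sum_congr rfl fun i _ => ?_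
        rw [sum_multinomialWeight_mul_apply hY.2 N i fun k => ((k : ℝ) / N - Y i) ^ 2,
          bernsteinPolynomial.sum_eval_mul_div_sub_sq _ hN]
    _ ≤ ∑ i, Y i / N := sum_le_sum fun i _ => by
        gcongr
        nlinarith [hY.1 i]
    _ = 1 / N := by rw [← sum_div, hY.2]

end Multinomial

/-- Multivariate Bernstein approximation on the simplex: for a continuous
function `f` on `Δ_{n-1}` and `Y ∈ Δ_{n-1}`,
`∑_{η ⊢ N} C(N,η) (∏ i Y i ^ η i) f(η/N) → f Y` as `N → ∞`. -/
theorem bernstein_simplex_tendsto (n : ℕ) (f : (Fin n → ℝ) → ℝ)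
    (hf : ContinuousOn f (stdSimplex ℝ (Fin n)))
    (Y : Fin n → ℝ) (hY : Y ∈ stdSimplex ℝ (Fin n)) :
    Tendsto
      (fun N : ℕ =>
        ∑ η ∈ Finset.Nat.antidiagonalTuple n N,
          (Nat.multinomial Finset.univ η : ℝ) * (∏ i, Y i ^ η i) *
            f (fun i => (η i : ℝ) / (N : ℝ)))
      atTop (nhds (f Y)) := by
  have hvar : Tendsto (fun N : ℕ => ∑ η ∈ piAntidiag univ N,
      multinomialWeight Y η * dist (fun i => (η i : ℝ) / N) Y ^ 2) atTop (𝓝 0) :=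
    squeeze_zero' (.of_forall fun N => sum_nonneg fun η _ =>
        mul_nonneg (multinomialWeight_nonneg hY.1 η) (sq_nonneg _))
      ((eventually_ne_atTop 0).mono fun N hN => sum_multinomialWeight_mul_dist_sq_le hY hN)
      tendsto_one_div_atTop_nhds_zero_nat
  simp_rw [← piAntidiag_univ_fin_eq_antidiagonalTuple]
  exact tendsto_sum_smul_of_tendsto_sum_mul_dist_sq (hf Y hY) hY
    ((isCompact_stdSimplex ℝ (Fin n)).exists_bound_of_continuousOn hf)
    (.of_forall fun N η _ => multinomialWeight_nonneg hY.1 η)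
    (.of_forall fun N => (sum_multinomialWeight Y N).trans (by rw [hY.2, one_pow]))
    ((eventually_ne_atTop 0).mono fun N hN η hη => div_mem_stdSimplex hη hN) hvar
end
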